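/- arXiv:2508.09259 — 3 statements merged into one kernel-verified Lean document; each statement's English description precedes it below -/
import Mathlib

section
/- Let P₁, P₂ be Hermitian complex n×n matrices with P₁² = 1, P₂² = 1 and P₁P₂ + P₂P₁ = 0, let ρ be a complex n×n matrix that is positive semidefinite with trace 1, and let 0 ≤ ε ≤ 1. If Re(tr(ρ·P₁)) ≥ 1 − ε, then |Re(tr(ρ·P₂))| ≤ √(2ε). (Generic form of Corollary 1: an almost-maximal expectation of one involution forces any anticommuting involution to have small expectation.) -/
open Matrix
open scoped ComplexOrder

/-!
For real `x`, the matrix `M = x • (1 - P₁) + P₂` is Hermitian and, because `P₁` and `P₂` are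
anticommuting involutions, `M² = 2x² • (1 - P₁) + 2x • P₂ + 1`. Positivity of `ρ` gives
`tr(ρ M²) ≥ 0`, i.e. `2(1 - ⟨P₁⟩) x² + 2⟨P₂⟩ x + 1 ≥ 0` for all `x`, and the discriminant of this
quadratic yields `⟨P₂⟩² ≤ 2(1 - ⟨P₁⟩) ≤ 2ε`.
-/

theorem Matrix.PosSemidef.re_trace_mul_conjTranspose_mul_self_nonneg {m : Type*} [Fintype m]
    {ρ : Matrix m m ℂ} (hρ : ρ.PosSemidef) (M : Matrix m m ℂ) :
    0 ≤ (ρ * (Mᴴ * M)).trace.re := by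
  have h : (ρ * (Mᴴ * M)).trace = (M * ρ * Mᴴ).trace := by
    rw [← Matrix.mul_assoc, trace_mul_comm, Matrix.mul_assoc]
  exact h ▸ (Complex.nonneg_iff.1 (hρ.mul_mul_conjTranspose_same M).trace_nonneg).1

theorem sq_le_of_forall_quadratic_nonneg {c b : ℝ} (h : ∀ x : ℝ, 0 ≤ c * (x * x) + 2 * b * x + 1) :
    b ^ 2 ≤ c := by
  have := discrim_le_zero h
  rw [discrim] at this
  linarith

theorem smul_one_sub_add_mul_self {A : Type*} [Ring A] [Algebra ℝ A] {p q : A}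
    (hp : p ^ 2 = 1) (hq : q ^ 2 = 1) (hpq : p * q + q * p = 0) (x : ℝ) :
    (x • (1 - p) + q) * (x • (1 - p) + q) = (2 * x ^ 2) • (1 - p) + (2 * x) • q + 1 := by
  rw [sq] at hp hq
  have hqp : q * p = -(p * q) := eq_neg_of_add_eq_zero_right hpq
  simp only [add_mul, mul_add, sub_mul, mul_sub, smul_mul_assoc, mul_smul_comm,
    one_mul, mul_one, hp, hq, hqp]
  module

theorem near_maximal_expectation_forces_anticommuting_small_general
    (n : ℕ)
    (P₁ P₂ : Matrix (Fin n) (Fin n) ℂ)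
    (hH₁ : P₁.IsHermitian) (hH₂ : P₂.IsHermitian)
    (hsq₁ : P₁ ^ 2 = 1) (hsq₂ : P₂ ^ 2 = 1)
    (hanti : P₁ * P₂ + P₂ * P₁ = 0)
    (ρ : Matrix (Fin n) (Fin n) ℂ)
    (hρ : ρ.PosSemidef) (htr : ρ.trace = 1)
    (ε : ℝ)
    (hexp : ((ρ * P₁).trace).re ≥ 1 - ε) :
    |((ρ * P₂).trace).re| ≤ Real.sqrt (2 * ε) := by
  set a := ((ρ * P₁).trace).re
  set b := ((ρ * P₂).trace).re
  have hquad (x : ℝ) : 0 ≤ 2 * (1 - a) * (x * x) + 2 * b * x + 1 := by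
    set M := x • (1 - P₁) + P₂
    have hM : Mᴴ = M := by
      simp only [M, conjTranspose_add, conjTranspose_smul, conjTranspose_sub, conjTranspose_one,
        hH₁.eq, hH₂.eq, star_trivial]
    have hMM := smul_one_sub_add_mul_self hsq₁ hsq₂ hanti x
    have hnonneg := hρ.re_trace_mul_conjTranspose_mul_self_nonneg M
    rw [hM, hMM] at hnonneg
    simp only [mul_add, mul_sub, mul_smul_comm, mul_one, trace_add, trace_sub, trace_smul, htr,
      Complex.add_re, Complex.sub_re, Complex.smul_re, Complex.one_re, smul_eq_mul] at hnonneg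
    linarith
  exact Real.abs_le_sqrt (by linarith [sq_le_of_forall_quadratic_nonneg hquad])

/-- Generic form of Corollary 1: if a Hermitian involution `P₁` has expectation at least
`1 − ε` in a quantum state `ρ`, then any Hermitian involution `P₂` anticommuting with
`P₁` has expectation at most `√(2ε)` in absolute value. -/
theorem near_maximal_expectation_forces_anticommuting_small
    (n : ℕ) (hn : 0 < n)
    (P₁ P₂ : Matrix (Fin n) (Fin n) ℂ)
    (hH₁ : P₁.IsHermitian) (hH₂ : P₂.IsHermitian)
    (hsq₁ : P₁ ^ 2 = 1) (hsq₂ : P₂ ^ 2 = 1)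
    (hanti : P₁ * P₂ + P₂ * P₁ = 0)
    (ρ : Matrix (Fin n) (Fin n) ℂ)
    (hρ : ρ.PosSemidef) (htr : ρ.trace = 1)
    (ε : ℝ) (hε0 : 0 ≤ ε) (hε1 : ε ≤ 1)
    (hexp : ((ρ * P₁).trace).re ≥ 1 - ε) :
    |((ρ * P₂).trace).re| ≤ Real.sqrt (2 * ε) :=
  near_maximal_expectation_forces_anticommuting_small_general n P₁ P₂ hH₁ hH₂ hsq₁ hsq₂ hanti ρ hρ
    htr ε hexp
end

section
/- Let P be a Hermitian complex d×d matrix with P² = 1, let ψ ∈ ℂ^d be a unit vector with Pψ = ψ, let ρ be a complex d×d matrix that is positive semidefinite with trace 1, and let 0 ≤ ε ≤ 1. If the fidelity satisfies ⟨ψ|ρ|ψ⟩ ≥ 1 − ε, then Re(tr(ρ·P)) ≥ 1 − 2√ε. (Second part of Lemma 2: every element of the stabilizer group of ψ has near-unit expectation value in any state with near-unit fidelity to ψ.) -/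
/-!
With `V = |ψ⟩⟨ψ|`, the relations `P² = 1`, `PV = VP = V` and `V² = V` make `X = 1 + P - 2V`
satisfy `X² = 2X`, so `2X = XᴴX` is positive semidefinite and `tr(ρX) ≥ 0`. Expanding,
`Re tr(ρP) ≥ 2⟨ψ|ρ|ψ⟩ - 1 ≥ 1 - 2ε`, and `ε ≤ √ε` because `ε ≤ 1`.
-/

open Matrix
open scoped ComplexOrder

namespace Matrix

variable {m n R : Type*}

lemma PosSemidef.trace_mul_conjTranspose_mul_self_nonneg [Fintype m] [Fintype n] [CommRing R]
    [PartialOrder R] [StarRing R] [AddLeftMono R] {ρ : Matrix n n R} (hρ : ρ.PosSemidef)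
    (B : Matrix m n R) : 0 ≤ (ρ * (Bᴴ * B)).trace := by
  rw [← Matrix.mul_assoc, trace_mul_cycle]
  exact (hρ.mul_mul_conjTranspose_same B).trace_nonneg

section Stabilizer

variable [CommRing R] [StarRing R] {P : Matrix n n R} {ψ : n → R}

lemma isHermitian_one_add_sub_two_vecMulVec_star [DecidableEq n] (hP : P.IsHermitian) :
    (1 + P - 2 • vecMulVec ψ (star ψ)).IsHermitian := by
  have hV : (vecMulVec ψ (star ψ)).IsHermitian := by
    rw [IsHermitian, conjTranspose_vecMulVec, star_star]
  exact (isHermitian_one.add hP).sub (hV.smul (.all 2))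

variable [Fintype n]

lemma trace_mul_vecMulVec_star (ρ : Matrix n n R) (ψ : n → R) :
    (ρ * vecMulVec ψ (star ψ)).trace = star ψ ⬝ᵥ (ρ *ᵥ ψ) := by
  rw [mul_vecMulVec, trace_vecMulVec, dotProduct_comm]

lemma vecMulVec_star_mul_self (hψ : star ψ ⬝ᵥ ψ = 1) :
    vecMulVec ψ (star ψ) * vecMulVec ψ (star ψ) = vecMulVec ψ (star ψ) := by
  rw [vecMulVec_mul_vecMulVec, hψ, one_smul]

lemma mul_vecMulVec_star_of_mulVec_eq (hstab : P *ᵥ ψ = ψ) :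
    P * vecMulVec ψ (star ψ) = vecMulVec ψ (star ψ) := by
  rw [mul_vecMulVec, hstab]

lemma vecMulVec_star_mul_of_mulVec_eq (hP : P.IsHermitian) (hstab : P *ᵥ ψ = ψ) :
    vecMulVec ψ (star ψ) * P = vecMulVec ψ (star ψ) := by
  rw [vecMulVec_mul, ← hP.eq, ← star_mulVec, hstab]

lemma one_add_sub_two_vecMulVec_star_mul_self [DecidableEq n] (hP : P.IsHermitian)
    (hsq : P ^ 2 = 1) (hψ : star ψ ⬝ᵥ ψ = 1) (hstab : P *ᵥ ψ = ψ) :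
    (1 + P - 2 • vecMulVec ψ (star ψ)) * (1 + P - 2 • vecMulVec ψ (star ψ)) =
      2 • (1 + P - 2 • vecMulVec ψ (star ψ)) := by
  have hPV := mul_vecMulVec_star_of_mulVec_eq hstab
  have hVP := vecMulVec_star_mul_of_mulVec_eq hP hstab
  have hVV := vecMulVec_star_mul_self hψ
  rw [sq] at hsq
  simp only [add_mul, mul_add, sub_mul, mul_sub, smul_mul_assoc, mul_smul_comm, one_mul,
    mul_one, hPV, hVP, hVV, hsq]
  module

end Stabilizer

lemma two_mul_re_dotProduct_sub_one_le_re_trace_mul {𝕜 : Type*} [RCLike 𝕜] [Fintype n]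
    [DecidableEq n] {P ρ : Matrix n n 𝕜} {ψ : n → 𝕜} (hρ : ρ.PosSemidef) (htr : ρ.trace = 1)
    (hP : P.IsHermitian) (hsq : P ^ 2 = 1) (hψ : star ψ ⬝ᵥ ψ = 1) (hstab : P *ᵥ ψ = ψ) :
    2 * RCLike.re (star ψ ⬝ᵥ (ρ *ᵥ ψ)) - 1 ≤ RCLike.re (ρ * P).trace := by
  set X := 1 + P - 2 • vecMulVec ψ (star ψ)
  have hnonneg := hρ.trace_mul_conjTranspose_mul_self_nonneg X
  rw [(isHermitian_one_add_sub_two_vecMulVec_star hP).eq,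
    one_add_sub_two_vecMulVec_star_mul_self hP hsq hψ hstab] at hnonneg
  have htrX : (ρ * X).trace = 1 + (ρ * P).trace - 2 * star ψ ⬝ᵥ (ρ *ᵥ ψ) := by
    rw [mul_sub, mul_add, mul_one, mul_smul_comm, trace_sub, trace_add, trace_smul, htr,
      trace_mul_vecMulVec_star, nsmul_eq_mul, Nat.cast_ofNat]
  rw [mul_smul_comm, trace_smul, htrX, nsmul_eq_mul, Nat.cast_ofNat] at hnonneg
  have hre := (RCLike.nonneg_iff.mp hnonneg).1
  simp only [RCLike.ofNat_mul_re, map_sub, map_add, RCLike.one_re] at hre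
  linarith

end Matrix

theorem stabilizer_expectation_from_fidelity_general
    (d : ℕ)
    (P : Matrix (Fin d) (Fin d) ℂ)
    (hHerm : P.IsHermitian) (hsq : P ^ 2 = 1)
    (ψ : Fin d → ℂ) (hψ : star ψ ⬝ᵥ ψ = 1) (hstab : P *ᵥ ψ = ψ)
    (ρ : Matrix (Fin d) (Fin d) ℂ)
    (hρ : ρ.PosSemidef) (htr : ρ.trace = 1)
    (ε : ℝ) (hε1 : ε ≤ 1)
    (hfid : (star ψ ⬝ᵥ (ρ *ᵥ ψ)).re ≥ 1 - ε) :
    ((ρ * P).trace).re ≥ 1 - 2 * Real.sqrt ε := by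
  have hP : 2 * (star ψ ⬝ᵥ (ρ *ᵥ ψ)).re - 1 ≤ ((ρ * P).trace).re :=
    two_mul_re_dotProduct_sub_one_le_re_trace_mul hρ htr hHerm hsq hψ hstab
  have hε : ε ≤ Real.sqrt ε := Real.le_sqrt_self_iff.mpr hε1
  linarith

/-- Second part of Lemma 2: if `ψ` is a unit vector stabilized by the Hermitian involution
`P`, and the quantum state `ρ` has fidelity at least `1 − ε` with `ψ`, then
`Re tr(ρP) ≥ 1 − 2√ε`. -/
theorem stabilizer_expectation_from_fidelity
    (d : ℕ)
    (P : Matrix (Fin d) (Fin d) ℂ)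
    (hHerm : P.IsHermitian) (hsq : P ^ 2 = 1)
    (ψ : Fin d → ℂ) (hψ : star ψ ⬝ᵥ ψ = 1) (hstab : P *ᵥ ψ = ψ)
    (ρ : Matrix (Fin d) (Fin d) ℂ)
    (hρ : ρ.PosSemidef) (htr : ρ.trace = 1)
    (ε : ℝ) (hε0 : 0 ≤ ε) (hε1 : ε ≤ 1)
    (hfid : (star ψ ⬝ᵥ (ρ *ᵥ ψ)).re ≥ 1 - ε) :
    ((ρ * P).trace).re ≥ 1 - 2 * Real.sqrt ε :=
  stabilizer_expectation_from_fidelity_general d P hHerm hsq ψ hψ hstab ρ hρ htr ε hε1 hfid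
end

section
/- Let U be a Hermitian complex d×d matrix with U² = 1, let ψ ∈ ℂ^d be a unit vector with Uψ = ψ, let ρ be a complex d×d matrix that is positive semidefinite with trace 1, and let ε ≥ 0. If Re(tr(ρ·U)) < 1 − ε, then the fidelity satisfies ⟨ψ|ρ|ψ⟩ < 1 − ε/2. (Lemma 3.) -/
/-!
Since `U` is a self-adjoint involution, `(1 + U) / 2` is an orthogonal projection, and since
`U ψ = ψ` it dominates the rank-one projection `|ψ⟩⟨ψ|`. Pairing with the state `ρ ≥ 0` is
monotone, so `⟨ψ|ρ|ψ⟩ = tr(ρ |ψ⟩⟨ψ|) ≤ tr(ρ (1 + U) / 2) = (1 + tr(ρ U)) / 2 < 1 - ε / 2`.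
-/

open Matrix
open scoped ComplexOrder MatrixOrder

theorem IsSelfAdjoint.isStarProjection_inv_two_smul_one_add {K R : Type*} [Field K] [StarRing K]
    [Ring R] [StarRing R] [Algebra K R] [StarModule K R] {u : R} (hu : IsSelfAdjoint u)
    (hu2 : u ^ 2 = 1) : IsStarProjection ((2⁻¹ : K) • (1 + u)) where
  isIdempotentElem := by
    have hsq : (1 + u) * (1 + u) = (2 : K) • (1 + u) := by
      rw [two_smul, mul_add, add_mul, add_mul, ← sq u, hu2, one_mul, one_mul, mul_one]; abel
    have hK : (2⁻¹ : K) * 2⁻¹ * 2 = 2⁻¹ := by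
      rcases eq_or_ne (2 : K) 0 with h | h
      · simp [h]
      · field_simp
    rw [IsIdempotentElem, smul_mul_smul_comm, hsq, smul_smul, hK]
  isSelfAdjoint := by
    refine IsSelfAdjoint.smul ?_ ((IsSelfAdjoint.one R).add hu)
    simp [IsSelfAdjoint, star_inv₀]

namespace Matrix

theorem isStarProjection_vecMulVec_self_star {n R : Type*} [Fintype n] [Semiring R] [StarRing R]
    {ψ : n → R} (hψ : star ψ ⬝ᵥ ψ = 1) : IsStarProjection (vecMulVec ψ (star ψ)) where
  isIdempotentElem := by rw [IsIdempotentElem, vecMulVec_mul_vecMulVec, hψ, one_smul]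
  isSelfAdjoint := by rw [IsSelfAdjoint, star_eq_conjTranspose, conjTranspose_vecMulVec, star_star]

theorem trace_mul_vecMulVec_self_star {n R : Type*} [Fintype n] [CommSemiring R] [StarRing R]
    (A : Matrix n n R) (ψ : n → R) : (A * vecMulVec ψ (star ψ)).trace = star ψ ⬝ᵥ (A *ᵥ ψ) := by
  rw [mul_vecMulVec, trace_vecMulVec, dotProduct_comm]

variable {n 𝕜 : Type*} [Fintype n] [RCLike 𝕜]

theorem PosSemidef.trace_mul_nonneg {A B : Matrix n n 𝕜} (hA : A.PosSemidef) (hB : B.PosSemidef) :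
    0 ≤ (A * B).trace := by
  classical
  have hS : (CFC.sqrt B)ᴴ = CFC.sqrt B := (CFC.sqrt_nonneg B).posSemidef.isHermitian.eq
  have hAB : (A * B).trace = ((CFC.sqrt B)ᴴ * A * CFC.sqrt B).trace := by
    rw [hS, trace_mul_cycle, CFC.sqrt_mul_sqrt_self B hB.nonneg, trace_mul_comm]
  rw [hAB]
  exact (hA.conjTranspose_mul_mul_same _).trace_nonneg

theorem PosSemidef.trace_mul_le_trace_mul {A B C : Matrix n n 𝕜} (hA : A.PosSemidef)
    (hBC : B ≤ C) : (A * B).trace ≤ (A * C).trace := by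
  rw [← sub_nonneg, ← trace_sub, ← mul_sub]
  exact hA.trace_mul_nonneg hBC

theorem PosSemidef.dotProduct_mulVec_le_trace_mul_of_mulVec_eq
    {ρ P : Matrix n n 𝕜} (hρ : ρ.PosSemidef) (hP : IsStarProjection P) {ψ : n → 𝕜}
    (hψ : star ψ ⬝ᵥ ψ = 1) (hPψ : P *ᵥ ψ = ψ) : star ψ ⬝ᵥ (ρ *ᵥ ψ) ≤ (ρ * P).trace := by
  have hQP : vecMulVec ψ (star ψ) ≤ P :=
    (isStarProjection_vecMulVec_self_star hψ).le_of_mul_eq_right hP (by rw [mul_vecMulVec, hPψ])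
  rw [← trace_mul_vecMulVec_self_star]
  exact hρ.trace_mul_le_trace_mul hQP

end Matrix

theorem fidelity_upper_bound_from_symmetry_general
    (d : ℕ)
    (U : Matrix (Fin d) (Fin d) ℂ)
    (hHerm : U.IsHermitian) (hsq : U ^ 2 = 1)
    (ψ : Fin d → ℂ) (hψ : star ψ ⬝ᵥ ψ = 1) (hstab : U *ᵥ ψ = ψ)
    (ρ : Matrix (Fin d) (Fin d) ℂ)
    (hρ : ρ.PosSemidef) (htr : ρ.trace = 1)
    (ε : ℝ)
    (hexp : ((ρ * U).trace).re < 1 - ε) :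
    (star ψ ⬝ᵥ (ρ *ᵥ ψ)).re < 1 - ε / 2 := by
  have hP : IsStarProjection ((2⁻¹ : ℂ) • (1 + U)) :=
    hHerm.isSelfAdjoint.isStarProjection_inv_two_smul_one_add hsq
  have hPψ : ((2⁻¹ : ℂ) • (1 + U)) *ᵥ ψ = ψ := by
    rw [smul_mulVec, add_mulVec, one_mulVec, hstab, ← two_smul ℂ, smul_smul,
      inv_mul_cancel₀ two_ne_zero, one_smul]
  have hfid := hρ.dotProduct_mulVec_le_trace_mul_of_mulVec_eq hP hψ hPψ
  rw [Matrix.mul_smul, trace_smul, Matrix.mul_add, mul_one, trace_add, htr, smul_eq_mul] at hfid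
  have hfid_re := Complex.re_le_re hfid
  norm_num at hfid_re
  linarith

/-- Lemma 3: if `ψ` is a unit vector fixed by the Hermitian involution `U` and the
quantum state `ρ` satisfies `Re tr(ρU) < 1 − ε`, then the fidelity satisfies
`⟨ψ|ρ|ψ⟩ < 1 − ε/2`. -/
theorem fidelity_upper_bound_from_symmetry
    (d : ℕ)
    (U : Matrix (Fin d) (Fin d) ℂ)
    (hHerm : U.IsHermitian) (hsq : U ^ 2 = 1)
    (ψ : Fin d → ℂ) (hψ : star ψ ⬝ᵥ ψ = 1) (hstab : U *ᵥ ψ = ψ)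
    (ρ : Matrix (Fin d) (Fin d) ℂ)
    (hρ : ρ.PosSemidef) (htr : ρ.trace = 1)
    (ε : ℝ) (hε : 0 ≤ ε)
    (hexp : ((ρ * U).trace).re < 1 - ε) :
    (star ψ ⬝ᵥ (ρ *ᵥ ψ)).re < 1 - ε / 2 :=
  fidelity_upper_bound_from_symmetry_general d U hHerm hsq ψ hψ hstab ρ hρ htr ε hexp
end
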